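/- Let Z be a [0,1]-valued random variable. Suppose there exists an independent [0,1]-valued random variable W with E[W] ∈ (0,1), and numbers p ∈ (0,1), c ≥ 0, such that for all measurable g : [0,1] → [0,∞): E[g(Z)Z] = p·E[g((1-W)Z+W)] and E[g(Z)Z²] = c·E[g((1-W)Z+W)·W]. Then, with α := (1-E[W])/E[W], Z ~ Be(pα, (1-p)α), W ~ Be(1,α), and c = p(αp+1). -/

import Mathlib

/-!
Testing both identities against `g x = (1 - x) ^ n`, and using
`1 - ((1 - W) Z + W) = (1 - Z) (1 - W)` together with independence, turns them into a recursion
for `u n = E[(1 - Z) ^ n]` and `v n = E[(1 - W) ^ n]`: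
`u n - u (n+1) = p u n v n` and `u n - 2 u (n+1) + u (n+2) = c u n (v n - v (n+1))`.
From `u 0 = v 0 = 1` and `v 1 = 1 - E[W]` this recursion determines `c` and all `u n`, `v n`;
they are the moments of `Be(pα, (1-p)α)` and `Be(1, α)`, and on `[0, 1]` the moments determine
the law (Weierstrass approximation).
-/

open MeasureTheory

/-- The Beta distribution `Be(a,b)` on `ℝ`: the measure with density
`x ↦ x^(a-1) (1-x)^(b-1) / B(a,b)` on `(0,1)` with respect to Lebesgue measure. -/
noncomputable def betaMeasure (a b : ℝ) : Measure ℝ :=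
  volume.withDensity fun x =>
    ENNReal.ofReal (Set.indicator (Set.Ioo 0 1)
      (fun t => Real.Gamma (a + b) / (Real.Gamma a * Real.Gamma b) *
        (t ^ (a - 1) * (1 - t) ^ (b - 1))) x)

open ProbabilityTheory
open scoped ENNReal NNReal

open Set

theorem Continuous.integrable_comp_of_ae_mem {Ω E : Type*} [MeasurableSpace Ω] {P : Measure Ω}
    [IsFiniteMeasure P] [TopologicalSpace E] [MeasurableSpace E] [OpensMeasurableSpace E]
    {f : E → ℝ} (hf : Continuous f) {K : Set E} (hK : IsCompact K) {X : Ω → E}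
    (hX : AEMeasurable X P) (hXK : ∀ᵐ ω ∂P, X ω ∈ K) :
    Integrable (fun ω => f (X ω)) P :=
  let ⟨C, hC⟩ := hK.exists_bound_of_continuousOn hf.continuousOn
  .of_bound (hf.measurable.comp_aemeasurable hX).aestronglyMeasurable C
    (hXK.mono fun _ hx => hC _ hx)

theorem Continuous.integrable_of_ae_mem {E : Type*} [TopologicalSpace E] [MeasurableSpace E]
    [OpensMeasurableSpace E] {μ : Measure E} [IsFiniteMeasure μ] {f : E → ℝ} (hf : Continuous f)
    {K : Set E} (hK : IsCompact K) (hμK : ∀ᵐ x ∂μ, x ∈ K) : Integrable f μ :=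
  hf.integrable_comp_of_ae_mem hK aemeasurable_id hμK

section Moments

variable {a b : ℝ} {μ ν : Measure ℝ} [IsFiniteMeasure μ] [IsFiniteMeasure ν]

theorem integral_eval_eq_of_integral_pow_eq (hμ : ∀ᵐ x ∂μ, x ∈ Icc a b)
    (hν : ∀ᵐ x ∂ν, x ∈ Icc a b) (h : ∀ n : ℕ, ∫ x, x ^ n ∂μ = ∫ x, x ^ n ∂ν)
    (q : Polynomial ℝ) : ∫ x, q.eval x ∂μ = ∫ x, q.eval x ∂ν := by
  have hint : ∀ {ρ : Measure ℝ} [IsFiniteMeasure ρ], (∀ᵐ x ∂ρ, x ∈ Icc a b) →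
      ∀ r : Polynomial ℝ, Integrable (fun x => r.eval x) ρ := fun hρ r =>
    r.continuous.integrable_of_ae_mem isCompact_Icc hρ
  induction q using Polynomial.induction_on' with
  | add q r hq hr =>
    simp only [Polynomial.eval_add]
    rw [integral_add (hint hμ q) (hint hμ r), integral_add (hint hν q) (hint hν r), hq, hr]
  | monomial n c =>
    simp only [Polynomial.eval_monomial]
    rw [integral_const_mul, integral_const_mul, h n]

theorem integral_eq_of_integral_pow_eq (hμ : ∀ᵐ x ∂μ, x ∈ Icc a b)
    (hν : ∀ᵐ x ∂ν, x ∈ Icc a b) (h : ∀ n : ℕ, ∫ x, x ^ n ∂μ = ∫ x, x ^ n ∂ν)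
    {f : ℝ → ℝ} (hf : Continuous f) : ∫ x, f x ∂μ = ∫ x, f x ∂ν := by
  set C := μ.real univ + ν.real univ
  refine eq_of_forall_dist_le fun ε hε => ?_
  have hδ : 0 < ε / (C + 1) := by positivity
  obtain ⟨q, hq⟩ := exists_polynomial_near_of_continuousOn a b f hf.continuousOn _ hδ
  have approx : ∀ {ρ : Measure ℝ} [IsFiniteMeasure ρ], (∀ᵐ x ∂ρ, x ∈ Icc a b) →
      dist (∫ x, f x ∂ρ) (∫ x, q.eval x ∂ρ) ≤ ε / (C + 1) * ρ.real univ := fun hρ => by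
    rw [dist_eq_norm, ← integral_sub (hf.integrable_of_ae_mem isCompact_Icc hρ)
      (q.continuous.integrable_of_ae_mem isCompact_Icc hρ)]
    refine norm_integral_le_of_norm_le_const (hρ.mono fun x hx => ?_)
    rw [Real.norm_eq_abs, abs_sub_comm]
    exact (hq x hx).le
  calc dist (∫ x, f x ∂μ) (∫ x, f x ∂ν)
      ≤ dist (∫ x, f x ∂μ) (∫ x, q.eval x ∂μ) + dist (∫ x, f x ∂ν) (∫ x, q.eval x ∂ν) := by
        rw [integral_eval_eq_of_integral_pow_eq hμ hν h, dist_comm (∫ x, f x ∂ν)]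
        exact dist_triangle _ _ _
    _ ≤ ε / (C + 1) * C := by rw [mul_add]; exact add_le_add (approx hμ) (approx hν)
    _ ≤ ε := by
        rw [div_mul_eq_mul_div, div_le_iff₀ (by positivity)]
        nlinarith

theorem MeasureTheory.Measure.ext_of_integral_pow_eq (hμ : ∀ᵐ x ∂μ, x ∈ Icc a b)
    (hν : ∀ᵐ x ∂ν, x ∈ Icc a b) (h : ∀ n : ℕ, ∫ x, x ^ n ∂μ = ∫ x, x ^ n ∂ν) : μ = ν :=
  ext_of_forall_integral_eq_of_IsFiniteMeasure fun f =>
    integral_eq_of_integral_pow_eq hμ hν h f.continuous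

theorem MeasureTheory.Measure.ext_of_integral_one_sub_pow_eq (hμ : ∀ᵐ x ∂μ, x ∈ Icc 0 1)
    (hν : ∀ᵐ x ∂ν, x ∈ Icc 0 1) (h : ∀ n : ℕ, ∫ x, (1 - x) ^ n ∂μ = ∫ x, (1 - x) ^ n ∂ν) :
    μ = ν := by
  have hφ : Measurable fun x : ℝ => 1 - x := by fun_prop
  have hmaps : ∀ {ρ : Measure ℝ}, (∀ᵐ x ∂ρ, x ∈ Icc (0 : ℝ) 1) →
      ∀ᵐ x ∂ρ.map (fun x => 1 - x), x ∈ Icc (0 : ℝ) 1 := fun hρ =>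
    (ae_map_iff hφ.aemeasurable measurableSet_Icc).2 <|
      hρ.mono fun x hx => ⟨by linarith [hx.2], by linarith [hx.1]⟩
  have key : μ.map (fun x => 1 - x) = ν.map (fun x => 1 - x) :=
    Measure.ext_of_integral_pow_eq (hmaps hμ) (hmaps hν) fun n => by
      rw [integral_map hφ.aemeasurable (by fun_prop), integral_map hφ.aemeasurable (by fun_prop),
        h n]
  have hinv : ∀ ρ : Measure ℝ, (ρ.map fun x => 1 - x).map (fun x => 1 - x) = ρ := fun ρ => by
    rw [Measure.map_map hφ hφ]
    simp
  rw [← hinv μ, key, hinv]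

end Moments

theorem betaMeasure_eq (a b : ℝ) : _root_.betaMeasure a b = ProbabilityTheory.betaMeasure a b := by
  refine congrArg volume.withDensity (funext fun x => ?_)
  simp only [betaPDF_eq, indicator, mem_Ioo, ProbabilityTheory.beta, one_div_div]
  split_ifs <;> ring_nf

namespace ProbabilityTheory

variable {a b : ℝ}

theorem beta_add_one_right (hb : b ≠ 0) (hab : a + b ≠ 0) :
    beta a (b + 1) = beta a b * (b / (a + b)) := by
  rw [beta, beta, ← add_assoc, Real.Gamma_add_one hb, Real.Gamma_add_one hab, div_mul_div_comm]
  ring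

theorem beta_one_left (hb : 0 < b) : beta 1 b = 1 / b := by
  rw [beta, add_comm, Real.Gamma_add_one hb.ne', Real.Gamma_one]
  field_simp [(Real.Gamma_pos_of_pos hb).ne']

theorem measurable_betaPDF (a b : ℝ) : Measurable (betaPDF a b) :=
  (measurable_betaPDFReal a b).ennreal_ofReal

theorem ae_mem_Icc_betaMeasure (a b : ℝ) : ∀ᵐ x ∂betaMeasure a b, x ∈ Icc 0 1 := by
  rw [ProbabilityTheory.betaMeasure, ae_withDensity_iff (measurable_betaPDF a b)]
  refine ae_of_all _ fun x hx => ⟨?_, ?_⟩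
  · exact not_lt.1 fun h => hx (betaPDF_eq_zero_of_nonpos h.le)
  · exact not_lt.1 fun h => hx (betaPDF_eq_zero_of_one_le h.le)

theorem betaPDF_mul_one_sub_pow (ha : 0 < a) (hb : 0 < b) (n : ℕ) (x : ℝ) :
    betaPDF a b x * ENNReal.ofReal ((1 - x) ^ n)
      = ENNReal.ofReal (beta a (b + n) / beta a b) * betaPDF a (b + n) x := by
  by_cases hx : 0 < x ∧ x < 1
  · obtain ⟨hx0, hx1⟩ : 0 < x ∧ 0 < 1 - x := ⟨hx.1, by linarith [hx.2]⟩
    have hB := beta_pos ha hb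
    have hBn := beta_pos ha (by positivity : 0 < b + n)
    rw [betaPDF_of_pos_lt_one hx.1 hx.2, betaPDF_of_pos_lt_one hx.1 hx.2,
      ← ENNReal.ofReal_mul (by positivity), ← ENNReal.ofReal_mul (by positivity),
      show b + n - 1 = (b - 1) + n by ring, Real.rpow_add_natCast hx1.ne']
    congr 1
    field_simp
  · simp [betaPDF_eq, hx]

theorem integral_one_sub_pow_betaMeasure (ha : 0 < a) (hb : 0 < b) (n : ℕ) :
    ∫ x, (1 - x) ^ n ∂betaMeasure a b = beta a (b + n) / beta a b := by
  have hnonneg : 0 ≤ᵐ[betaMeasure a b] fun x => (1 - x) ^ n :=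
    (ae_mem_Icc_betaMeasure a b).mono fun x hx => pow_nonneg (by linarith [hx.2]) n
  rw [integral_eq_lintegral_of_nonneg_ae hnonneg (by fun_prop), ProbabilityTheory.betaMeasure,
    lintegral_withDensity_eq_lintegral_mul _ (measurable_betaPDF a b) (by fun_prop)]
  simp only [Pi.mul_apply, betaPDF_mul_one_sub_pow ha hb]
  rw [lintegral_const_mul _ (measurable_betaPDF _ _),
    lintegral_betaPDF_eq_one ha (by positivity), mul_one, ENNReal.toReal_ofReal]
  exact div_nonneg (beta_pos ha (by positivity)).le (beta_pos ha hb).le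

end ProbabilityTheory

section Recursion

variable {p α c : ℝ} {u v : ℕ → ℝ}

theorem const_eq_of_one_sub_moment_recursion (hα : 0 < α) (hu0 : u 0 = 1) (hv0 : v 0 = 1)
    (hv1 : v 1 = α / (α + 1)) (hA : ∀ n, u n - u (n + 1) = p * (u n * v n))
    (hB : ∀ n, u n - 2 * u (n + 1) + u (n + 2) = c * (u n * (v n - v (n + 1)))) :
    c = p * (α * p + 1) := by
  have h0 := hA 0
  have h1 := hA 1
  have h2 := hB 0
  simp only [hu0, hv0, hv1, zero_add, mul_one, one_mul] at h0 h1 h2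
  have hα1 : α + 1 ≠ 0 := by positivity
  have hc : c = (α + 1) * (1 - 2 * u 1 + u 2) := by
    rw [h2]; field_simp; ring
  have h1' : (α + 1) * (u 1 - u 2) = p * u 1 * α := by
    rw [h1]; field_simp
  linear_combination hc - h1' + (α + 1 + p * α) * h0

theorem one_sub_moment_recursion_step (hp : 0 < p) (hα : 0 < α)
    (hA : ∀ n, u n - u (n + 1) = p * (u n * v n))
    (hB : ∀ n, u n - 2 * u (n + 1) + u (n + 2) = c * (u n * (v n - v (n + 1))))
    (hc : c = p * (α * p + 1)) {n : ℕ} (hun : u n ≠ 0)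
    (hun1 : u (n + 1) = u n * (((1 - p) * α + n) / (α + n))) (hvn : v n = α / (α + n)) :
    v (n + 1) = α / (α + (n + 1 : ℕ)) ∧
      u (n + 2) = u (n + 1) * (((1 - p) * α + (n + 1 : ℕ)) / (α + (n + 1 : ℕ))) := by
  have hαn : α + n ≠ 0 := by positivity
  have hαn1 : α + (n + 1 : ℕ) ≠ 0 := by positivity
  have h := hB n
  have h' := hA (n + 1)
  rw [hvn, hc] at h
  -- eliminating `u (n + 2)` between the two identities leaves a multiple of `u n`
  have hmul : u n * (1 - ((1 - p) * α + n) / (α + n)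
      - p * (α * p + 1) * (α / (α + n) - v (n + 1))
      - p * (((1 - p) * α + n) / (α + n)) * v (n + 1)) = 0 := by
    linear_combination h + h' + (1 + p * v (n + 1)) * hun1
  have hsol := (mul_eq_zero.1 hmul).resolve_left hun
  have hv : v (n + 1) = α / (α + (n + 1 : ℕ)) := by
    push_cast
    rw [eq_div_iff (by positivity)]
    refine mul_left_cancel₀ (by positivity : p ^ 2 * α ≠ 0) ?_
    field_simp at hsol
    linear_combination hsol
  refine ⟨hv, ?_⟩
  rw [hv] at h'
  rw [eq_sub_of_add_eq (sub_eq_iff_eq_add'.1 h').symm]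
  field_simp
  push_cast
  ring

theorem eq_of_one_sub_moment_recursion (hp : p ∈ Ioo 0 1) (hα : 0 < α) (hu0 : u 0 = 1)
    (hv0 : v 0 = 1) (hv1 : v 1 = α / (α + 1)) (hA : ∀ n, u n - u (n + 1) = p * (u n * v n))
    (hB : ∀ n, u n - 2 * u (n + 1) + u (n + 2) = c * (u n * (v n - v (n + 1)))) :
    c = p * (α * p + 1) ∧
      ∀ n, u n = beta (p * α) ((1 - p) * α + n) / beta (p * α) ((1 - p) * α) ∧
        v n = α / (α + n) := by
  obtain ⟨hp0, hp1⟩ := hp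
  set U : ℕ → ℝ := fun n => beta (p * α) ((1 - p) * α + n) / beta (p * α) ((1 - p) * α)
  have hb : 0 < (1 - p) * α := mul_pos (by linarith) hα
  have hU_pos : ∀ n, 0 < U n := fun n =>
    div_pos (beta_pos (by positivity) (by positivity)) (beta_pos (by positivity) hb)
  have hU0 : U 0 = 1 := by
    simp only [U, Nat.cast_zero, add_zero]
    exact div_self (beta_pos (by positivity) hb).ne'
  have hU_succ : ∀ n : ℕ, U (n + 1) = U n * (((1 - p) * α + n) / (α + n)) := fun n => by
    simp only [U, Nat.cast_succ, ← add_assoc]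
    rw [beta_add_one_right (by positivity) (by positivity), mul_div_right_comm,
      show p * α + ((1 - p) * α + n) = α + n by ring]
  have hc := const_eq_of_one_sub_moment_recursion hα hu0 hv0 hv1 hA hB
  refine ⟨hc, fun n => ?_⟩
  suffices h : ∀ n, u n = U n ∧ u (n + 1) = U (n + 1) ∧ v n = α / (α + n) from
    ⟨(h n).1, (h n).2.2⟩
  intro n
  induction n with
  | zero =>
    have h0 := hA 0
    simp only [hu0, hv0, zero_add, mul_one] at h0
    refine ⟨by rw [hu0, hU0], ?_, by simp [hv0, hα.ne']⟩
    rw [zero_add, hU_succ, hU0, Nat.cast_zero, add_zero, add_zero, mul_div_cancel_right₀ _ hα.ne']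
    linarith
  | succ n ih =>
    obtain ⟨hun, hun1, hvn⟩ := ih
    obtain ⟨hv, hu2⟩ := one_sub_moment_recursion_step hp0 hα hA hB hc
      (hun ▸ (hU_pos n).ne') (by rw [hun1, hun, hU_succ]) hvn
    exact ⟨hun1, by rw [hu2, hun1, hU_succ (n + 1)], hv⟩

end Recursion

theorem map_eq_betaMeasure_of_integral_one_sub_pow {Ω : Type*} [MeasurableSpace Ω]
    {P : Measure Ω} [IsFiniteMeasure P] {X : Ω → ℝ} (hX : Measurable X)
    (hX01 : ∀ ω, X ω ∈ Icc 0 1) {a b : ℝ} (ha : 0 < a) (hb : 0 < b)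
    (h : ∀ n : ℕ, ∫ ω, (1 - X ω) ^ n ∂P = beta a (b + n) / beta a b) :
    P.map X = _root_.betaMeasure a b := by
  have := isProbabilityMeasureBeta ha hb
  rw [betaMeasure_eq]
  refine Measure.ext_of_integral_one_sub_pow_eq
    ((ae_map_iff hX.aemeasurable measurableSet_Icc).2 (ae_of_all _ hX01))
    (ae_mem_Icc_betaMeasure a b) fun n => ?_
  rw [integral_map hX.aemeasurable (by fun_prop), h n, integral_one_sub_pow_betaMeasure ha hb]

section Identities

variable {Ω : Type*} [MeasurableSpace Ω] {P : Measure Ω}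

theorem integral_eq_mul_integral_of_lintegral_ofReal_eq {f g : Ω → ℝ} {r : ℝ} (hr : 0 ≤ r)
    (hf : Integrable f P) (hg : Integrable g P) (hf0 : 0 ≤ᵐ[P] f) (hg0 : 0 ≤ᵐ[P] g)
    (h : ∫⁻ ω, ENNReal.ofReal (f ω) ∂P = ENNReal.ofReal r * ∫⁻ ω, ENNReal.ofReal (g ω) ∂P) :
    ∫ ω, f ω ∂P = r * ∫ ω, g ω ∂P := by
  rw [← ofReal_integral_eq_lintegral_ofReal hf hf0, ← ofReal_integral_eq_lintegral_ofReal hg hg0,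
    ← ENNReal.ofReal_mul hr] at h
  exact (ENNReal.ofReal_eq_ofReal_iff (integral_nonneg_of_ae hf0)
    (mul_nonneg hr (integral_nonneg_of_ae hg0))).1 h

variable [IsFiniteMeasure P] {X : Ω → ℝ}

theorem integrable_one_sub_pow (hX : Measurable X) (hX01 : ∀ ω, X ω ∈ Icc 0 1) (k : ℕ) :
    Integrable (fun ω => (1 - X ω) ^ k) P :=
  ((continuous_const.sub continuous_id).pow k).integrable_comp_of_ae_mem isCompact_Icc
    hX.aemeasurable (ae_of_all _ hX01)

theorem integral_one_sub_pow_mul_self (hX : Measurable X) (hX01 : ∀ ω, X ω ∈ Icc 0 1) (n : ℕ) :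
    ∫ ω, (1 - X ω) ^ n * X ω ∂P = ∫ ω, (1 - X ω) ^ n ∂P - ∫ ω, (1 - X ω) ^ (n + 1) ∂P := by
  have hint := integrable_one_sub_pow (P := P) hX hX01
  rw [← integral_sub (hint n) (hint (n + 1))]
  congr 1 with ω
  ring

theorem integral_one_sub_pow_mul_sq (hX : Measurable X) (hX01 : ∀ ω, X ω ∈ Icc 0 1) (n : ℕ) :
    ∫ ω, (1 - X ω) ^ n * X ω ^ 2 ∂P = ∫ ω, (1 - X ω) ^ n ∂P
      - 2 * ∫ ω, (1 - X ω) ^ (n + 1) ∂P + ∫ ω, (1 - X ω) ^ (n + 2) ∂P := by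
  have hint := integrable_one_sub_pow (P := P) hX hX01
  have hsub : Integrable (fun ω => (1 - X ω) ^ n - 2 * (1 - X ω) ^ (n + 1)) P :=
    (hint n).sub ((hint (n + 1)).const_mul 2)
  rw [← integral_const_mul, ← integral_sub (hint n) ((hint (n + 1)).const_mul 2),
    ← integral_add hsub (hint (n + 2))]
  congr 1 with ω
  ring

end Identities

section SizeBias

variable {Ω : Type*} [MeasurableSpace Ω] {P : Measure Ω} [IsFiniteMeasure P] {Z W : Ω → ℝ}

theorem Continuous.integrable_comp_prodMk_of_mem_Icc {F : ℝ × ℝ → ℝ} (hF : Continuous F)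
    (hZm : Measurable Z) (hWm : Measurable W) (hZ01 : ∀ ω, Z ω ∈ Icc 0 1)
    (hW01 : ∀ ω, W ω ∈ Icc 0 1) : Integrable (fun ω => F (Z ω, W ω)) P :=
  hF.integrable_comp_of_ae_mem (isCompact_Icc.prod isCompact_Icc) (hZm.prodMk hWm).aemeasurable
    (ae_of_all _ fun ω => ⟨hZ01 ω, hW01 ω⟩)

theorem integral_one_sub_pow_sub_succ_eq (hZm : Measurable Z) (hWm : Measurable W)
    (hZ01 : ∀ ω, Z ω ∈ Icc 0 1) (hW01 : ∀ ω, W ω ∈ Icc 0 1) (hindep : IndepFun Z W P)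
    {p : ℝ} (hp : 0 ≤ p)
    (heq1 : ∀ g : ℝ → ℝ≥0∞, Measurable g →
      ∫⁻ ω, g (Z ω) * ENNReal.ofReal (Z ω) ∂P
        = ENNReal.ofReal p * ∫⁻ ω, g ((1 - W ω) * Z ω + W ω) ∂P) (n : ℕ) :
    ∫ ω, (1 - Z ω) ^ n ∂P - ∫ ω, (1 - Z ω) ^ (n + 1) ∂P
      = p * ((∫ ω, (1 - Z ω) ^ n ∂P) * ∫ ω, (1 - W ω) ^ n ∂P) := by
  have hZ1 : ∀ ω, 0 ≤ 1 - Z ω := fun ω => sub_nonneg.2 (hZ01 ω).2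
  have hW1 : ∀ ω, 0 ≤ 1 - W ω := fun ω => sub_nonneg.2 (hW01 ω).2
  have hT : ∀ ω, 1 - ((1 - W ω) * Z ω + W ω) = (1 - Z ω) * (1 - W ω) := fun ω => by ring
  have h := heq1 (fun x => ENNReal.ofReal ((1 - x) ^ n)) (by fun_prop)
  simp only [hT, mul_pow] at h
  rw [lintegral_congr fun ω => (ENNReal.ofReal_mul (pow_nonneg (hZ1 ω) n)).symm] at h
  have hindep' : ∫ ω, (1 - Z ω) ^ n * (1 - W ω) ^ n ∂P
      = (∫ ω, (1 - Z ω) ^ n ∂P) * ∫ ω, (1 - W ω) ^ n ∂P :=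
    hindep.integral_comp_mul_comp (f := fun x => (1 - x) ^ n) (g := fun y => (1 - y) ^ n)
      hZm.aemeasurable hWm.aemeasurable (by fun_prop) (by fun_prop)
  rw [← integral_one_sub_pow_mul_self hZm hZ01, ← hindep']
  exact integral_eq_mul_integral_of_lintegral_ofReal_eq hp
    ((show Continuous fun z : ℝ × ℝ => (1 - z.1) ^ n * z.1 by
      fun_prop).integrable_comp_prodMk_of_mem_Icc hZm hWm hZ01 hW01)
    ((show Continuous fun z : ℝ × ℝ => (1 - z.1) ^ n * (1 - z.2) ^ n by
      fun_prop).integrable_comp_prodMk_of_mem_Icc hZm hWm hZ01 hW01)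
    (ae_of_all _ fun ω => mul_nonneg (pow_nonneg (hZ1 ω) n) (hZ01 ω).1)
    (ae_of_all _ fun ω => mul_nonneg (pow_nonneg (hZ1 ω) n) (pow_nonneg (hW1 ω) n)) h

theorem integral_one_sub_pow_second_difference_eq (hZm : Measurable Z) (hWm : Measurable W)
    (hZ01 : ∀ ω, Z ω ∈ Icc 0 1) (hW01 : ∀ ω, W ω ∈ Icc 0 1) (hindep : IndepFun Z W P)
    {c : ℝ} (hc : 0 ≤ c)
    (heq2 : ∀ g : ℝ → ℝ≥0∞, Measurable g →
      ∫⁻ ω, g (Z ω) * ENNReal.ofReal (Z ω) ^ 2 ∂P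
        = ENNReal.ofReal c * ∫⁻ ω, g ((1 - W ω) * Z ω + W ω) * ENNReal.ofReal (W ω) ∂P)
    (n : ℕ) :
    ∫ ω, (1 - Z ω) ^ n ∂P - 2 * ∫ ω, (1 - Z ω) ^ (n + 1) ∂P + ∫ ω, (1 - Z ω) ^ (n + 2) ∂P
      = c * ((∫ ω, (1 - Z ω) ^ n ∂P)
        * (∫ ω, (1 - W ω) ^ n ∂P - ∫ ω, (1 - W ω) ^ (n + 1) ∂P)) := by
  have hZ1 : ∀ ω, 0 ≤ 1 - Z ω := fun ω => sub_nonneg.2 (hZ01 ω).2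
  have hW1 : ∀ ω, 0 ≤ 1 - W ω := fun ω => sub_nonneg.2 (hW01 ω).2
  have hT : ∀ ω, 1 - ((1 - W ω) * Z ω + W ω) = (1 - Z ω) * (1 - W ω) := fun ω => by ring
  have h := heq2 (fun x => ENNReal.ofReal ((1 - x) ^ n)) (by fun_prop)
  simp only [hT, mul_pow] at h
  rw [lintegral_congr fun ω => by
      rw [← ENNReal.ofReal_pow (hZ01 ω).1, ← ENNReal.ofReal_mul (pow_nonneg (hZ1 ω) n)],
    lintegral_congr fun ω => (ENNReal.ofReal_mul
      (mul_nonneg (pow_nonneg (hZ1 ω) n) (pow_nonneg (hW1 ω) n))).symm] at h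
  have hindep' : ∫ ω, (1 - Z ω) ^ n * (1 - W ω) ^ n * W ω ∂P
      = (∫ ω, (1 - Z ω) ^ n ∂P) * ∫ ω, (1 - W ω) ^ n * W ω ∂P := by
    simp_rw [mul_assoc]
    exact hindep.integral_comp_mul_comp (f := fun x => (1 - x) ^ n)
      (g := fun y => (1 - y) ^ n * y) hZm.aemeasurable hWm.aemeasurable (by fun_prop)
      (by fun_prop)
  rw [← integral_one_sub_pow_mul_sq hZm hZ01, ← integral_one_sub_pow_mul_self hWm hW01,
    ← hindep']
  exact integral_eq_mul_integral_of_lintegral_ofReal_eq hc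
    ((show Continuous fun z : ℝ × ℝ => (1 - z.1) ^ n * z.1 ^ 2 by
      fun_prop).integrable_comp_prodMk_of_mem_Icc hZm hWm hZ01 hW01)
    ((show Continuous fun z : ℝ × ℝ => (1 - z.1) ^ n * (1 - z.2) ^ n * z.2 by
      fun_prop).integrable_comp_prodMk_of_mem_Icc hZm hWm hZ01 hW01)
    (ae_of_all _ fun ω => by have := hZ1 ω; positivity)
    (ae_of_all _ fun ω => by have := hZ1 ω; have := hW1 ω; have := (hW01 ω).1; positivity) h

end SizeBias

/-- Characterization of the general Beta distribution: if `Z, W` are independent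
`[0,1]`-valued random variables with `E[W] ∈ (0,1)`, `p ∈ (0,1)`, `c ≥ 0`, and for
all measurable `g ≥ 0`: `E[g(Z)Z] = p·E[g((1-W)Z+W)]` and
`E[g(Z)Z²] = c·E[g((1-W)Z+W)·W]`, then, with `α := (1-E[W])/E[W]`,
`Z ~ Be(pα, (1-p)α)`, `W ~ Be(1,α)` and `c = p(αp+1)`. -/
theorem stmt14 {Ω : Type*} [MeasurableSpace Ω] (P : Measure Ω) [IsProbabilityMeasure P]
    (Z W : Ω → ℝ) (hZm : Measurable Z) (hWm : Measurable W)
    (hZ01 : ∀ ω, Z ω ∈ Set.Icc (0 : ℝ) 1) (hW01 : ∀ ω, W ω ∈ Set.Icc (0 : ℝ) 1)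
    (hindep : IndepFun Z W P)
    (hEW : ∫ ω, W ω ∂P ∈ Set.Ioo (0 : ℝ) 1)
    (p c α : ℝ) (hp : p ∈ Set.Ioo (0 : ℝ) 1) (hc : 0 ≤ c)
    (hαdef : α = (1 - ∫ ω, W ω ∂P) / ∫ ω, W ω ∂P)
    (heq1 : ∀ g : ℝ → ℝ≥0∞, Measurable g →
      ∫⁻ ω, g (Z ω) * ENNReal.ofReal (Z ω) ∂P
        = ENNReal.ofReal p * ∫⁻ ω, g ((1 - W ω) * Z ω + W ω) ∂P)
    (heq2 : ∀ g : ℝ → ℝ≥0∞, Measurable g →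
      ∫⁻ ω, g (Z ω) * ENNReal.ofReal (Z ω) ^ 2 ∂P
        = ENNReal.ofReal c * ∫⁻ ω, g ((1 - W ω) * Z ω + W ω) * ENNReal.ofReal (W ω) ∂P) :
    P.map Z = _root_.betaMeasure (p * α) ((1 - p) * α) ∧
      P.map W = _root_.betaMeasure 1 α ∧ c = p * (α * p + 1) := by
  obtain ⟨hm0, hm1⟩ := hEW
  have hα : 0 < α := hαdef ▸ div_pos (by linarith) hm0
  have hv1 : ∫ ω, (1 - W ω) ^ 1 ∂P = α / (α + 1) := by
    simp only [pow_one]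
    rw [integral_sub (integrable_const 1) (Integrable.of_mem_Icc 0 1 hWm.aemeasurable
      (ae_of_all _ hW01)), integral_const, probReal_univ, one_smul, hαdef]
    field_simp
    ring
  obtain ⟨hcα, hmoments⟩ := eq_of_one_sub_moment_recursion hp hα (by simp) (by simp) hv1
    (integral_one_sub_pow_sub_succ_eq hZm hWm hZ01 hW01 hindep hp.1.le heq1)
    (integral_one_sub_pow_second_difference_eq hZm hWm hZ01 hW01 hindep hc heq2)
  refine ⟨map_eq_betaMeasure_of_integral_one_sub_pow hZm hZ01 (mul_pos hp.1 hα)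
    (mul_pos (sub_pos.2 hp.2) hα) fun n => (hmoments n).1,
    map_eq_betaMeasure_of_integral_one_sub_pow hWm hW01 one_pos hα fun n => ?_, hcα⟩
  rw [(hmoments n).2, beta_one_left (by positivity), beta_one_left hα]
  field_simp
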